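/- arXiv:2504.09411 — 2 statements merged into one kernel-verified Lean document; each statement's English description precedes it below -/
import Mathlib

section
/- Let d ≥ 1 be an integer and let f be a dimension function with k ⪯ f ⪯ (k+1) for some integer 0 ≤ k ≤ d−1. Then there exist constants c₁, c₂ > 0 depending only on d such that for every axis-parallel rectangle R ⊂ ℝ^d with side lengths a₁ ≥ a₂ ≥ ⋯ ≥ a_d > 0, c₁·a₁⋯a_k·a_{k+1}^{−k}·f(a_{k+1}) ≤ H^f_∞(R) ≤ c₂·a₁⋯a_k·a_{k+1}^{−k}·f(a_{k+1}). -/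
open MeasureTheory Metric Set Filter
open scoped ENNReal NNReal Topology BigOperators

noncomputable section

/-- Distance from a real number to the nearest integer: `‖t‖`. -/
def distInt (t : ℝ) : ℝ := |t - round t|

/-- The sup norm `|q| = max_i |q_i|` of an integer vector, as a natural number. -/
def qnorm {n : ℕ} (q : Fin n → ℤ) : ℕ := Finset.univ.sup fun i => (q i).natAbs

/-- The unit cube `[0,1]^{nm}` inside `ℝ^{nm} = (ℝ^n)^m`. -/
def unitCube (n m : ℕ) : Set (EuclideanSpace ℝ (Fin m × Fin n)) :=
  {x | ∀ p, x p ∈ Set.Icc (0:ℝ) 1}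

/-- The weighted simultaneous approximation limsup set `W(n,m;Ψ)`. -/
def Wset (n m : ℕ) (Ψ : Fin m → (Fin n → ℤ) → ℝ) :
    Set (EuclideanSpace ℝ (Fin m × Fin n)) :=
  {x | (∀ p, x p ∈ Set.Icc (0:ℝ) 1) ∧
    {q : Fin n → ℤ | ∀ j, distInt (∑ i, (q i : ℝ) * x (j, i)) < Ψ j q}.Infinite}

/-- The multiplicative approximation limsup set `M^×(n,m;ψ)`. -/
def Mset (n m : ℕ) (ψ : (Fin n → ℤ) → ℝ) :
    Set (EuclideanSpace ℝ (Fin m × Fin n)) :=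
  {x | (∀ p, x p ∈ Set.Icc (0:ℝ) 1) ∧
    {q : Fin n → ℤ | (∏ j : Fin m, distInt (∑ i, (q i : ℝ) * x (j, i))) < ψ q}.Infinite}

/-- The Hausdorff measure associated with a dimension function `f`. -/
def hMeasure (f : ℝ → ℝ) {X : Type*} [EMetricSpace X] [MeasurableSpace X] [BorelSpace X] :
    Measure X :=
  Measure.mkMetric fun r => ENNReal.ofReal (f r.toReal)

/-- A dimension function: continuous, non-decreasing, vanishing at `0`, nonnegative on `[0,∞)`. -/
def IsDimFun (f : ℝ → ℝ) : Prop :=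
  ContinuousOn f (Set.Ici 0) ∧ MonotoneOn f (Set.Ici 0) ∧ f 0 = 0 ∧ ∀ x, 0 ≤ x → 0 ≤ f x

/-- `f ⪯ s` : `f(y)/y^s ≤ f(x)/x^s` for `0 < x < y`. -/
def DimLe (f : ℝ → ℝ) (s : ℝ) : Prop :=
  ∀ x y : ℝ, 0 < x → x < y → f y / y ^ s ≤ f x / x ^ s

/-- `f ≺ s` : `f ⪯ s` and `f(r)/r^s → ∞` as `r → 0⁺`. -/
def DimLt (f : ℝ → ℝ) (s : ℝ) : Prop :=
  DimLe f s ∧ Tendsto (fun r : ℝ => f r / r ^ s) (nhdsWithin 0 (Set.Ioi 0)) atTop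

/-- `s ⪯ f` : `f(x)/x^s ≤ f(y)/y^s` for `0 < x < y`. -/
def LeDim (s : ℝ) (f : ℝ → ℝ) : Prop :=
  ∀ x y : ℝ, 0 < x → x < y → f x / x ^ s ≤ f y / y ^ s

/-- `s ≺ f` : `s ⪯ f` and `f(r)/r^s → 0` as `r → 0⁺`. -/
def LtDim (s : ℝ) (f : ℝ → ℝ) : Prop :=
  LeDim s f ∧ Tendsto (fun r : ℝ => f r / r ^ s) (nhdsWithin 0 (Set.Ioi 0)) (nhds 0)

/-- The quantity `t_q(Ψ,f)`. -/
def tq (n m : ℕ) (Ψ : Fin m → (Fin n → ℤ) → ℝ) (f : ℝ → ℝ) (q : Fin n → ℤ) : ℝ :=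
  ⨅ i : Fin m, f (Ψ i q / (qnorm q : ℝ)) * (Ψ i q / (qnorm q : ℝ)) ^ ((1 - (n : ℝ)) * m) *
    ∏ j ∈ Finset.univ.filter (fun j => Ψ i q < Ψ j q), Ψ j q / Ψ i q

/-- The Fourier transform of a measure on `ℝ^ι`. -/
def muFT {ι : Type*} [Fintype ι] (μ : Measure (EuclideanSpace ℝ ι))
    (x : EuclideanSpace ℝ ι) : ℂ :=
  ∫ ξ, Complex.exp (((-2 * Real.pi * (inner ℝ ξ x : ℝ) : ℝ) : ℂ) * Complex.I) ∂μ

/-- The Fourier dimension of a subset of `ℝ^ι`. -/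
def fdim {ι : Type*} [Fintype ι] (E : Set (EuclideanSpace ℝ ι)) : ℝ :=
  sSup {s : ℝ | 0 ≤ s ∧ s ≤ Fintype.card ι ∧
    ∃ μ : Measure (EuclideanSpace ℝ ι), IsProbabilityMeasure μ ∧
      (∃ K : Set (EuclideanSpace ℝ ι), IsCompact K ∧ K ⊆ E ∧ μ Kᶜ = 0) ∧
      ∃ C : ℝ, ∀ x : EuclideanSpace ℝ ι, x ≠ 0 →
        ‖muFT μ x‖ ≤ C * ‖x‖ ^ (-(s / 2))}

/-- The open rectangle-type set `R(q,δ)`. -/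
def Rset (n m : ℕ) (q : Fin n → ℤ) (δ : Fin m → ℝ) :
    Set (EuclideanSpace ℝ (Fin m × Fin n)) :=
  {x | (∀ p, x p ∈ Set.Icc (0:ℝ) 1) ∧ ∀ j, distInt (∑ i, (q i : ℝ) * x (j, i)) < δ j}

/-- The closed rectangle-type set `R̄(q,δ)`. -/
def RsetC (n m : ℕ) (q : Fin n → ℤ) (δ : Fin m → ℝ) :
    Set (EuclideanSpace ℝ (Fin m × Fin n)) :=
  {x | (∀ p, x p ∈ Set.Icc (0:ℝ) 1) ∧ ∀ j, distInt (∑ i, (q i : ℝ) * x (j, i)) ≤ δ j}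

/-- gcd of the coordinates of an integer vector. -/
def intGcd {n : ℕ} (q : Fin n → ℤ) : ℤ := Finset.univ.gcd q

/-- The set `R'(q,δ)` (coprimality restricted rectangles). -/
def Rset' (n m : ℕ) (q : Fin n → ℤ) (δ : Fin m → ℝ) :
    Set (EuclideanSpace ℝ (Fin m × Fin n)) :=
  {x | (∀ p, x p ∈ Set.Icc (0:ℝ) 1) ∧ ∃ p : Fin m → ℤ,
    ∀ j, Int.gcd (intGcd q) (p j) = 1 ∧ |(∑ i, (q i : ℝ) * x (j, i)) - (p j : ℝ)| < δ j}

/-- The multiplicative neighbourhood `M(q,δ)`. -/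
def MsetDelta (n m : ℕ) (q : Fin n → ℤ) (δ : ℝ) :
    Set (EuclideanSpace ℝ (Fin m × Fin n)) :=
  {x | (∀ p, x p ∈ Set.Icc (0:ℝ) 1) ∧
    (∏ j : Fin m, distInt (∑ i, (q i : ℝ) * x (j, i))) < δ}

/-- The coprime multiplicative neighbourhood `M'(q,δ)`. -/
def Mset' (n m : ℕ) (q : Fin n → ℤ) (δ : ℝ) :
    Set (EuclideanSpace ℝ (Fin m × Fin n)) :=
  {x | (∀ p, x p ∈ Set.Icc (0:ℝ) 1) ∧ ∃ p : Fin m → ℤ,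
    (∀ j, Int.gcd (intGcd q) (p j) = 1) ∧
    (∏ j : Fin m, |(∑ i, (q i : ℝ) * x (j, i)) - (p j : ℝ)|) < δ}

/-- The index set `A_m(δ)`, parametrized by `N = N(δ)`. -/
def Aset (m N : ℕ) : Set (Fin m → ℤ) :=
  {k | (∀ j, 0 ≤ k j) ∧ (∑ j, k j) = (N : ℤ) - m}

/-- Hausdorff `f`-content: infimum of `Σ f(diam B_i)` over countable covers by balls. -/
def hContent (f : ℝ → ℝ) {X : Type*} [PseudoMetricSpace X] (E : Set X) : ℝ≥0∞ :=
  ⨅ (c : ℕ → X) (r : ℕ → ℝ) (_ : E ⊆ ⋃ i, Metric.ball (c i) (r i)),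
    ∑' i, ENNReal.ofReal (f (2 * r i))

/-- Lower density of a set of positive integers. -/
def lowerDensity (Λ : Set ℕ) : ℝ :=
  Filter.liminf (fun Q : ℕ => (({i | i ∈ Λ ∧ 1 ≤ i ∧ i ≤ Q}.ncard : ℝ)) / Q) Filter.atTop

/-!
Lower bound: apply the mass distribution principle to Lebesgue measure on the rectangle `R`,
scaled by `f(a_{k+1}) / (a_{k+1}^{k+1} a_{k+2} ⋯ a_d)`. A ball of diameter `ρ` meets `R` in a box
of volume at most `ρ^k · min(a_{k+1}, ρ) · a_{k+2} ⋯ a_d`, and the two growth conditions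
`k ⪯ f ⪯ k + 1` say precisely that `f(a_{k+1}) ρ^k min(a_{k+1}, ρ) ≤ f(ρ) a_{k+1}^{k+1}`.

Upper bound: cover `R` by a grid of cubes of side `a_{k+1}`. Only the `k` longest sides need more
than one cube, so at most `2^k a_1 ⋯ a_k / a_{k+1}^k` cubes are used; each lies in a ball of
diameter `2√d a_{k+1}`, and `f ⪯ k + 1` gives `f(2√d a_{k+1}) ≤ (2√d)^{k+1} f(a_{k+1})`.
-/

section Boxes

variable {ι : Type*} [Fintype ι]

def closedBox (b L : ι → ℝ) : Set (EuclideanSpace ℝ ι) :=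
  {x | ∀ i, x i ∈ Icc (b i) (b i + L i)}

theorem EuclideanSpace.volume_setOf_forall_mem (s : ι → Set ℝ) :
    volume {x : EuclideanSpace ℝ ι | ∀ i, x i ∈ s i} = ∏ i, volume (s i) := by
  have hset : {x : EuclideanSpace ℝ ι | ∀ i, x i ∈ s i} =
      (MeasurableEquiv.toLp 2 (ι → ℝ)).symm ⁻¹' univ.pi s := by
    ext x
    simp only [mem_preimage, mem_univ_pi]
    rfl
  rw [hset, (EuclideanSpace.volume_preserving_symm_measurableEquiv_toLp ι).measure_preimage_equiv,
    volume_pi_pi]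

theorem volume_closedBox (b L : ι → ℝ) :
    volume (closedBox b L) = ∏ i, ENNReal.ofReal (L i) := by
  simp only [closedBox, EuclideanSpace.volume_setOf_forall_mem, Real.volume_Icc,
    add_sub_cancel_left]

theorem volume_closedBox_inter_ball_le (b L : ι → ℝ) (c : EuclideanSpace ℝ ι) (r : ℝ) :
    volume (closedBox b L ∩ ball c r) ≤ ∏ i, ENNReal.ofReal (min (L i) (2 * r)) := by
  have hsub : closedBox b L ∩ ball c r ⊆
      {x | ∀ i, x i ∈ Icc (b i) (b i + L i) ∩ Icc (c i - r) (c i + r)} := by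
    rintro x ⟨hxE, hxB⟩ i
    have hcoord : |x i - c i| ≤ r :=
      (PiLp.dist_apply_le x c i).trans (mem_ball.1 hxB).le
    obtain ⟨h₁, h₂⟩ := abs_sub_le_iff.1 hcoord
    exact ⟨hxE i, by linarith, by linarith⟩
  refine (measure_mono hsub).trans ?_
  rw [EuclideanSpace.volume_setOf_forall_mem]
  gcongr with i
  rw [ENNReal.ofReal_min]
  refine le_min ?_ ?_
  · exact (measure_mono inter_subset_left).trans (by rw [Real.volume_Icc, add_sub_cancel_left])
  · refine (measure_mono inter_subset_right).trans ?_
    rw [Real.volume_Icc, show c i + r - (c i - r) = 2 * r by ring]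

end Boxes

section Content

variable {X : Type*} [PseudoMetricSpace X] {f : ℝ → ℝ} {E : Set X}

theorem le_hContent_of_measure_inter_ball_le [MeasurableSpace X] (μ : Measure X)
    (h : ∀ c r, μ (E ∩ ball c r) ≤ ENNReal.ofReal (f (2 * r))) : μ E ≤ hContent f E := by
  refine le_iInf fun c => le_iInf fun r => le_iInf fun hcov => ?_
  calc μ E ≤ μ (⋃ i, E ∩ ball (c i) (r i)) := by
        rw [← inter_iUnion]
        exact measure_mono (subset_inter subset_rfl hcov)
    _ ≤ ∑' i, μ (E ∩ ball (c i) (r i)) := measure_iUnion_le _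
    _ ≤ ∑' i, ENNReal.ofReal (f (2 * r i)) := ENNReal.tsum_le_tsum fun i => h _ _

theorem hContent_le_tsum_of_subset_iUnion_ball [Nonempty X] {ι : Type*} [Countable ι]
    (hf0 : f 0 = 0) (c : ι → X) (r : ι → ℝ) (hcov : E ⊆ ⋃ i, ball (c i) (r i)) :
    hContent f E ≤ ∑' i, ENNReal.ofReal (f (2 * r i)) := by
  obtain ⟨e, he⟩ := Countable.exists_injective_nat ι
  -- Transport the cover along `e`; indices outside its range get radius `0`, costing `f 0 = 0`.
  set c' : ℕ → X := Function.extend e c fun _ => Classical.arbitrary X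
  set r' : ℕ → ℝ := Function.extend e r 0
  have hcov' : E ⊆ ⋃ n, ball (c' n) (r' n) := by
    refine hcov.trans (iUnion_subset fun i => ?_)
    rw [← he.extend_apply c, ← he.extend_apply r]
    exact subset_iUnion (fun n => ball (c' n) (r' n)) (e i)
  have hsum : (fun n => ENNReal.ofReal (f (2 * r' n))) =
      Function.extend e (fun i => ENNReal.ofReal (f (2 * r i))) 0 := by
    funext n
    by_cases hn : ∃ i, e i = n
    · obtain ⟨i, rfl⟩ := hn
      simp only [r', he.extend_apply]
    · simp only [r', Function.extend_apply' _ _ _ hn, Pi.zero_apply, mul_zero, hf0,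
        ENNReal.ofReal_zero]
  calc hContent f E ≤ ∑' n, ENNReal.ofReal (f (2 * r' n)) :=
        iInf_le_of_le c' (iInf_le_of_le r' (iInf_le_of_le hcov' le_rfl))
    _ = ∑' i, ENNReal.ofReal (f (2 * r i)) := by rw [hsum, tsum_extend_zero he]

end Content

theorem exists_lt_ceil_abs_sub_le {s L t : ℝ} (hs : 0 < s) (hL : 0 < L) (ht : t ∈ Icc 0 L) :
    ∃ j : ℕ, j < ⌈L / s⌉₊ ∧ |t - (j + 1 / 2) * s| ≤ s / 2 := by
  suffices ∃ j : ℕ, j < ⌈L / s⌉₊ ∧ j * s ≤ t ∧ t ≤ (j + 1) * s by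
    obtain ⟨j, hj, h₁, h₂⟩ := this
    exact ⟨j, hj, abs_le.2 ⟨by linarith, by linarith⟩⟩
  rcases ht.1.eq_or_lt with rfl | ht₀
  · exact ⟨0, Nat.ceil_pos.2 (div_pos hL hs), by simp, by simpa using hs.le⟩
  have hceil : 1 ≤ ⌈t / s⌉₊ := Nat.one_le_ceil_iff.2 (div_pos ht₀ hs)
  have hceil_cast : ((⌈t / s⌉₊ - 1 : ℕ) : ℝ) = ⌈t / s⌉₊ - 1 := by push_cast [hceil]; ring
  refine ⟨⌈t / s⌉₊ - 1, ?_, ?_, ?_⟩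
  · have := Nat.ceil_mono (div_le_div_of_nonneg_right ht.2 hs.le)
    omega
  · rw [hceil_cast, ← le_div_iff₀ hs]
    linarith [Nat.ceil_lt_add_one (div_pos ht₀ hs).le]
  · rw [hceil_cast, sub_add_cancel, ← div_le_iff₀ hs]
    exact Nat.le_ceil _

theorem EuclideanSpace.dist_le_sqrt_card_mul {ι : Type*} [Fintype ι] {x y : EuclideanSpace ℝ ι}
    {δ : ℝ} (h : ∀ i, |x i - y i| ≤ δ) : dist x y ≤ √(Fintype.card ι) * δ := by
  rcases isEmpty_or_nonempty ι with hι | ⟨⟨i₀⟩⟩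
  · simp [Subsingleton.elim x y]
  have hδ : ∀ i, dist (x i) (y i) ^ 2 ≤ δ ^ 2 := fun i =>
    pow_le_pow_left₀ dist_nonneg (h i) 2
  calc dist x y = √(∑ i, dist (x i) (y i) ^ 2) := EuclideanSpace.dist_eq x y
    _ ≤ √(∑ _i : ι, δ ^ 2) := Real.sqrt_le_sqrt (Finset.sum_le_sum fun i _ => hδ i)
    _ = √(Fintype.card ι) * δ := by
      rw [Finset.sum_const, Finset.card_univ, nsmul_eq_mul, Real.sqrt_mul (Nat.cast_nonneg _),
        Real.sqrt_sq ((abs_nonneg _).trans (h i₀))]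

section Grid

variable {ι : Type*} [Fintype ι] {b L : ι → ℝ} {s r : ℝ}

theorem closedBox_subset_iUnion_ball (hs : 0 < s) (hL : ∀ i, 0 < L i)
    (hr : √(Fintype.card ι) * (s / 2) < r) :
    closedBox b L ⊆ ⋃ v : (i : ι) → Fin ⌈L i / s⌉₊,
      ball (WithLp.toLp 2 fun i => b i + (v i + 1 / 2) * s) r := by
  intro x hx
  have hnear : ∀ i, ∃ j : ℕ, j < ⌈L i / s⌉₊ ∧ |(x i - b i) - (j + 1 / 2) * s| ≤ s / 2 :=
    fun i => exists_lt_ceil_abs_sub_le hs (hL i) ⟨by linarith [(hx i).1], by linarith [(hx i).2]⟩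
  choose j hj hjx using hnear
  refine mem_iUnion.2 ⟨fun i => ⟨j i, hj i⟩, mem_ball.2 ?_⟩
  refine lt_of_le_of_lt (EuclideanSpace.dist_le_sqrt_card_mul fun i => ?_) hr
  simpa [sub_sub] using hjx i

theorem hContent_closedBox_le {f : ℝ → ℝ} (hf0 : f 0 = 0) (hs : 0 < s) (hL : ∀ i, 0 < L i)
    (hr : √(Fintype.card ι) * (s / 2) < r) :
    hContent f (closedBox b L) ≤ ENNReal.ofReal ((∏ i, (⌈L i / s⌉₊ : ℝ)) * f (2 * r)) := by
  classical
  calc hContent f (closedBox b L)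
      ≤ ∑' _v : (i : ι) → Fin ⌈L i / s⌉₊, ENNReal.ofReal (f (2 * r)) :=
        hContent_le_tsum_of_subset_iUnion_ball hf0 _ (fun _ => r)
          (closedBox_subset_iUnion_ball hs hL hr)
    _ = ENNReal.ofReal ((∏ i, (⌈L i / s⌉₊ : ℝ)) * f (2 * r)) := by
      rw [tsum_fintype, Finset.sum_const, Finset.card_univ, Fintype.card_pi, nsmul_eq_mul,
        ENNReal.ofReal_mul (by positivity),
        ENNReal.ofReal_prod_of_nonneg fun i _ => Nat.cast_nonneg _]
      simp

end Grid

section DimensionFunction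

variable {f : ℝ → ℝ} {s x y : ℝ}

theorem LeDim.mul_rpow_le (h : LeDim s f) (hx : 0 < x) (hxy : x ≤ y) :
    f x * y ^ s ≤ f y * x ^ s := by
  rcases hxy.eq_or_lt with rfl | hxy
  · exact le_rfl
  · have := h x y hx hxy
    rwa [div_le_div_iff₀ (Real.rpow_pos_of_pos hx s)
      (Real.rpow_pos_of_pos (hx.trans hxy) s)] at this

theorem DimLe.mul_rpow_le (h : DimLe f s) (hx : 0 < x) (hxy : x ≤ y) :
    f y * x ^ s ≤ f x * y ^ s := by
  rcases hxy.eq_or_lt with rfl | hxy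
  · exact le_rfl
  · have := h x y hx hxy
    rwa [div_le_div_iff₀ (Real.rpow_pos_of_pos (hx.trans hxy) s)
      (Real.rpow_pos_of_pos hx s)] at this

theorem DimLe.le_rpow_mul (h : DimLe f s) (hx : 0 < x) {c : ℝ} (hc : 1 ≤ c) :
    f (c * x) ≤ c ^ s * f x := by
  have := h.mul_rpow_le hx (le_mul_of_one_le_left hx.le hc)
  rw [Real.mul_rpow (by linarith) hx.le, ← mul_assoc, mul_comm (f x)] at this
  exact le_of_mul_le_mul_right this (Real.rpow_pos_of_pos hx s)

theorem mul_rpow_mul_min_le (hle : LeDim s f) (hge : DimLe f (s + 1)) {ρ : ℝ} (hx : 0 < x)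
    (hρ : 0 < ρ) : f x * (ρ ^ s * min x ρ) ≤ f ρ * x ^ (s + 1) := by
  rcases le_total x ρ with hxρ | hρx
  · rw [min_eq_left hxρ, Real.rpow_add_one hx.ne', ← mul_assoc, ← mul_assoc]
    exact mul_le_mul_of_nonneg_right (hle.mul_rpow_le hx hxρ) hx.le
  · rw [min_eq_right hρx, ← Real.rpow_add_one hρ.ne']
    exact hge.mul_rpow_le hρ hρx

end DimensionFunction

section SortedSides

open Finset

variable {d k : ℕ} (hk : k < d)
include hk

theorem Fin.prod_univ_eq_prod_lt_mul_mul_prod_gt {M : Type*} [CommMonoid M] (g : Fin d → M) :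
    ∏ i, g i = (∏ i ∈ univ.filter (fun i : Fin d => (i : ℕ) < k), g i) * g ⟨k, hk⟩ *
      ∏ i ∈ univ.filter (fun i : Fin d => k < (i : ℕ)), g i := by
  have hcompl : univ.filter (fun i : Fin d => ¬ (i : ℕ) < k) =
      insert ⟨k, hk⟩ (univ.filter fun i : Fin d => k < (i : ℕ)) := by
    ext i
    simp [Fin.ext_iff]
    omega
  rw [← prod_filter_mul_prod_filter_not univ (fun i : Fin d => (i : ℕ) < k), hcompl,
    prod_insert (by simp), mul_assoc]

theorem prod_min_le_pow_mul_min_mul_prod_gt {a : Fin d → ℝ} (ha : ∀ i, 0 ≤ a i) {ρ : ℝ}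
    (hρ : 0 ≤ ρ) :
    ∏ i, min (a i) ρ ≤
      ρ ^ k * min (a ⟨k, hk⟩) ρ * ∏ i ∈ univ.filter (fun i : Fin d => k < (i : ℕ)), a i := by
  have hmin : ∀ i, 0 ≤ min (a i) ρ := fun i => le_min (ha i) hρ
  have hlt : ∏ i ∈ univ.filter (fun i : Fin d => (i : ℕ) < k), min (a i) ρ ≤ ρ ^ k := by
    calc _ ≤ ∏ _i ∈ univ.filter (fun i : Fin d => (i : ℕ) < k), ρ :=
          Finset.prod_le_prod (fun i _ => hmin i) fun i _ => min_le_right _ _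
      _ = ρ ^ k := by rw [prod_const, Fin.card_filter_val_lt, min_eq_right hk.le]
  rw [Fin.prod_univ_eq_prod_lt_mul_mul_prod_gt hk]
  refine mul_le_mul (mul_le_mul_of_nonneg_right hlt (hmin _))
    (Finset.prod_le_prod (fun i _ => hmin i) fun i _ => min_le_left _ _)
    (prod_nonneg fun i _ => hmin i) (mul_nonneg (pow_nonneg hρ k) (hmin _))

theorem prod_ceil_div_le {a : Fin d → ℝ} (ha : ∀ i, 0 < a i) (hanti : Antitone a) :
    ∏ i, (⌈a i / a ⟨k, hk⟩⌉₊ : ℝ) ≤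
      2 ^ k * (∏ i ∈ univ.filter (fun i : Fin d => (i : ℕ) < k), a i) / a ⟨k, hk⟩ ^ k := by
  have hceil : ∀ i : Fin d,
      (⌈a i / a ⟨k, hk⟩⌉₊ : ℝ) ≤ if (i : ℕ) < k then 2 * (a i / a ⟨k, hk⟩) else 1 := by
    intro i
    split_ifs with hi
    · refine (Nat.ceil_lt_two_mul ?_).le
      have : a ⟨k, hk⟩ ≤ a i := hanti (Fin.le_def.2 hi.le)
      rw [lt_div_iff₀ (ha _)]
      linarith [ha ⟨k, hk⟩]
    · have : a i ≤ a ⟨k, hk⟩ := hanti (Fin.le_def.2 (not_lt.1 hi))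
      exact_mod_cast Nat.ceil_le.2 (by simpa using div_le_one_of_le₀ this (ha _).le)
  calc _ ≤ ∏ i : Fin d, if (i : ℕ) < k then 2 * (a i / a ⟨k, hk⟩) else 1 :=
        Finset.prod_le_prod (fun i _ => Nat.cast_nonneg _) fun i _ => hceil i
    _ = ∏ i ∈ univ.filter (fun i : Fin d => (i : ℕ) < k), 2 * (a i / a ⟨k, hk⟩) :=
        (prod_filter _ _).symm
    _ = _ := by
        rw [prod_mul_distrib, prod_div_distrib, prod_const, prod_const, Fin.card_filter_val_lt,
          min_eq_right hk.le, mul_div_assoc]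

end SortedSides

section Rectangle

open Finset

variable {d k : ℕ} (hk : k < d) {f : ℝ → ℝ} {a : Fin d → ℝ}
include hk

theorem le_hContent_closedBox (hf : ∀ x, 0 ≤ x → 0 ≤ f x) (hle : LeDim k f)
    (hge : DimLe f (k + 1)) (ha : ∀ i, 0 < a i) (b : Fin d → ℝ) (σ : Equiv.Perm (Fin d)) :
    ENNReal.ofReal ((∏ i ∈ univ.filter (fun i : Fin d => (i : ℕ) < k), a i) *
        a ⟨k, hk⟩ ^ (-(k : ℝ)) * f (a ⟨k, hk⟩)) ≤
      hContent f (closedBox b (a ∘ σ)) := by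
  set x := a ⟨k, hk⟩
  set Q := ∏ i ∈ univ.filter (fun i : Fin d => k < (i : ℕ)), a i
  have hx : 0 < x := ha _
  have hQ : 0 < Q := prod_pos fun i _ => ha i
  set C := f x / (x ^ (k + 1) * Q)
  have hC : 0 ≤ C := div_nonneg (hf x hx.le) (by positivity)
  have hmass : ENNReal.ofReal C * volume (closedBox b (a ∘ σ)) =
      ENNReal.ofReal ((∏ i ∈ univ.filter (fun i : Fin d => (i : ℕ) < k), a i) *
        x ^ (-(k : ℝ)) * f x) := by
    simp only [volume_closedBox, Function.comp_apply]
    rw [← ENNReal.ofReal_prod_of_nonneg fun i _ => (ha _).le, ← ENNReal.ofReal_mul hC,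
      Equiv.prod_comp σ a, Fin.prod_univ_eq_prod_lt_mul_mul_prod_gt hk, Real.rpow_neg hx.le,
      Real.rpow_natCast]
    congr 1
    simp only [C, show a ⟨k, hk⟩ = x from rfl]
    field_simp
    ring
  have hball : ∀ ρ, 0 < ρ → C * ∏ i, min (a i) ρ ≤ f ρ := by
    intro ρ hρ
    have hdim := mul_rpow_mul_min_le hle hge hx hρ
    rw [Real.rpow_natCast, show (k : ℝ) + 1 = (k + 1 : ℕ) by push_cast; ring,
      Real.rpow_natCast] at hdim
    calc C * ∏ i, min (a i) ρ ≤ C * (ρ ^ k * min x ρ * Q) :=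
          mul_le_mul_of_nonneg_left (prod_min_le_pow_mul_min_mul_prod_gt hk (fun i => (ha i).le)
            hρ.le) hC
      _ = f x * (ρ ^ k * min x ρ) / x ^ (k + 1) := by simp only [C]; field_simp
      _ ≤ f ρ := by rwa [div_le_iff₀ (by positivity)]
  rw [← hmass]
  refine le_hContent_of_measure_inter_ball_le (ENNReal.ofReal C • volume) fun c r => ?_
  rw [Measure.smul_apply, smul_eq_mul]
  rcases le_or_gt r 0 with hr | hr
  · simp [ball_eq_empty.2 hr]
  calc ENNReal.ofReal C * volume (closedBox b (a ∘ σ) ∩ ball c r)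
      ≤ ENNReal.ofReal C * ∏ i, ENNReal.ofReal (min (a (σ i)) (2 * r)) :=
        mul_le_mul_right (volume_closedBox_inter_ball_le _ _ _ _) _
    _ = ENNReal.ofReal (C * ∏ i, min (a i) (2 * r)) := by
        rw [Equiv.prod_comp σ fun i => ENNReal.ofReal (min (a i) (2 * r)),
          ← ENNReal.ofReal_prod_of_nonneg fun i _ => le_min (ha i).le (by positivity),
          ENNReal.ofReal_mul hC]
    _ ≤ ENNReal.ofReal (f (2 * r)) := ENNReal.ofReal_le_ofReal (hball _ (by positivity))

theorem hContent_closedBox_le_of_antitone (hf : ∀ x, 0 ≤ x → 0 ≤ f x) (hf0 : f 0 = 0)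
    (hge : DimLe f (k + 1)) (ha : ∀ i, 0 < a i) (hanti : Antitone a) (b : Fin d → ℝ)
    (σ : Equiv.Perm (Fin d)) :
    hContent f (closedBox b (a ∘ σ)) ≤
      ENNReal.ofReal ((4 * √d) ^ d * ((∏ i ∈ univ.filter (fun i : Fin d => (i : ℕ) < k), a i) *
        a ⟨k, hk⟩ ^ (-(k : ℝ)) * f (a ⟨k, hk⟩))) := by
  set x := a ⟨k, hk⟩
  set P := ∏ i ∈ univ.filter (fun i : Fin d => (i : ℕ) < k), a i
  have hx : 0 < x := ha _
  have hP : 0 < P := prod_pos fun i _ => ha i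
  have hsqrt : 1 ≤ √d := Real.one_le_sqrt.2 (by exact_mod_cast hk.pos)
  have hcover := hContent_closedBox_le (b := b) hf0 hx (fun i => ha (σ i))
    (r := √d * x) (by rw [Fintype.card_fin]; nlinarith)
  have hcount : ∏ i, (⌈(a ∘ σ) i / x⌉₊ : ℝ) ≤ 2 ^ k * P / x ^ k := by
    simpa only [Function.comp_apply, Equiv.prod_comp σ fun i => (⌈a i / x⌉₊ : ℝ)]
      using prod_ceil_div_le hk ha hanti
  have hgrowth : f (2 * (√d * x)) ≤ (2 * √d) ^ d * f x := by
    have h := hge.le_rpow_mul hx (c := 2 * √d) (by linarith)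
    rw [show (k : ℝ) + 1 = (k + 1 : ℕ) by push_cast; ring, Real.rpow_natCast] at h
    rw [← mul_assoc]
    exact h.trans (mul_le_mul_of_nonneg_right
      (pow_le_pow_right₀ (by linarith) hk) (hf x hx.le))
  refine hcover.trans (ENNReal.ofReal_le_ofReal ?_)
  calc (∏ i, (⌈(a ∘ σ) i / x⌉₊ : ℝ)) * f (2 * (√d * x))
      ≤ (2 ^ k * P / x ^ k) * ((2 * √d) ^ d * f x) :=
        mul_le_mul hcount hgrowth (hf _ (by positivity)) (by positivity [hP])
    _ ≤ (2 ^ d * P / x ^ k) * ((2 * √d) ^ d * f x) := by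
        have hfx := hf x hx.le
        gcongr
        norm_num
    _ = (4 * √d) ^ d * (P * x ^ (-(k : ℝ)) * f x) := by
        rw [Real.rpow_neg hx.le, Real.rpow_natCast, div_eq_mul_inv,
          show (4 : ℝ) * √d = 2 * (2 * √d) by ring, mul_pow 2 (2 * √d) d]
        ring

end Rectangle

theorem stmt10_general (d : ℕ) :
    ∃ c₁ c₂ : ℝ, 0 < c₁ ∧ 0 < c₂ ∧
      ∀ (f : ℝ → ℝ), IsDimFun f →
      ∀ (k : ℕ) (hk : k < d), LeDim (k : ℝ) f → DimLe f ((k : ℝ) + 1) →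
      ∀ (b a : Fin d → ℝ) (σ : Equiv.Perm (Fin d)),
        (∀ i, 0 < a i) → (∀ i j : Fin d, i ≤ j → a j ≤ a i) →
        ENNReal.ofReal (c₁ * ((∏ i ∈ Finset.univ.filter (fun i : Fin d => (i : ℕ) < k), a i) *
            (a ⟨k, hk⟩) ^ (-(k : ℝ)) * f (a ⟨k, hk⟩)))
          ≤ hContent f {x : EuclideanSpace ℝ (Fin d) |
              ∀ i, x i ∈ Set.Icc (b i) (b i + a (σ i))} ∧
        hContent f {x : EuclideanSpace ℝ (Fin d) |
              ∀ i, x i ∈ Set.Icc (b i) (b i + a (σ i))}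
          ≤ ENNReal.ofReal (c₂ * ((∏ i ∈ Finset.univ.filter (fun i : Fin d => (i : ℕ) < k), a i) *
            (a ⟨k, hk⟩) ^ (-(k : ℝ)) * f (a ⟨k, hk⟩))) := by
  refine ⟨1, (4 * √d) ^ d, one_pos, by cases d <;> positivity, ?_⟩
  intro f ⟨_, _, hf0, hf⟩ k hk hle hge b a σ ha hanti
  rw [one_mul]
  exact ⟨le_hContent_closedBox hk hf hle hge ha b σ,
    hContent_closedBox_le_of_antitone hk hf hf0 hge ha (fun i j hij => hanti i j hij) b σ⟩

/-- Hausdorff `f`-content of a rectangle (Proposition 2.3): for an axis-parallel rectangle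
with side lengths `a₁ ≥ a₂ ≥ ⋯ ≥ a_d > 0` (placed along the coordinates according to an
arbitrary permutation `σ`), the `f`-content is comparable to
`a₁⋯a_k · a_{k+1}^{-k} · f(a_{k+1})`, with constants depending only on `d`. -/
theorem stmt10 (d : ℕ) (hd : 1 ≤ d) :
    ∃ c₁ c₂ : ℝ, 0 < c₁ ∧ 0 < c₂ ∧
      ∀ (f : ℝ → ℝ), IsDimFun f →
      ∀ (k : ℕ) (hk : k < d), LeDim (k : ℝ) f → DimLe f ((k : ℝ) + 1) →
      ∀ (b a : Fin d → ℝ) (σ : Equiv.Perm (Fin d)),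
        (∀ i, 0 < a i) → (∀ i j : Fin d, i ≤ j → a j ≤ a i) →
        ENNReal.ofReal (c₁ * ((∏ i ∈ Finset.univ.filter (fun i : Fin d => (i : ℕ) < k), a i) *
            (a ⟨k, hk⟩) ^ (-(k : ℝ)) * f (a ⟨k, hk⟩)))
          ≤ hContent f {x : EuclideanSpace ℝ (Fin d) |
              ∀ i, x i ∈ Set.Icc (b i) (b i + a (σ i))} ∧
        hContent f {x : EuclideanSpace ℝ (Fin d) |
              ∀ i, x i ∈ Set.Icc (b i) (b i + a (σ i))}
          ≤ ENNReal.ofReal (c₂ * ((∏ i ∈ Finset.univ.filter (fun i : Fin d => (i : ℕ) < k), a i) *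
            (a ⟨k, hk⟩) ^ (-(k : ℝ)) * f (a ⟨k, hk⟩))) :=
  stmt10_general d
end
end

section
/- Let n,m ≥ 1 be integers, q ∈ ℤ^n∖{0}, δ = (δ_1,…,δ_m) ∈ (0,1/2)^m, and let μ be a Borel probability measure supported on [0,1]^{nm}. Then there is a constant C depending only on n and m such that μ(R̄(q,δ)) ≤ C·δ_1⋯δ_m·(1 + Σ_{t∈ℤ^m∖{0}, |t_j|≤2/δ_j for all 1≤j≤m} |μ̂(t_1q,…,t_mq)|). -/
open MeasureTheory Metric Set Filter
open scoped ENNReal NNReal Topology BigOperators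

noncomputable section

/-! Put `D(x) = ∑_{s ∈ B} 𝐞(∑_j s_j (q·x_j))` over the box `B = ∏_j [0, N_j]` with
`N_j = ⌊1/(6δ_j)⌋`. On `R̄(q,δ)` every phase `s_j (q·x_j)` lies within `1/6` of an integer, so
each one-dimensional factor of `D` has real part at least half its length and
`|D| ≥ |B|/2^m`. On the other hand, expanding `|D|²` gives
`∫ |D|² dμ = ∑_{s,s' ∈ B} μ̂((s' - s)_1 q, …, (s' - s)_m q)`, which is at most
`|B| ∑_{t ∈ B - B} |μ̂(t_1 q, …, t_m q)|`, and the `t = 0` term is `1`. Markov's inequality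
and `|B| ≥ ∏_j 1/(6δ_j)` give the bound with `C = 24^m`. -/

open Real FourierTransform Finset
open scoped Pointwise

theorem sum_sum_sub_le_card_mul_sum_sub {A : Type*} [AddCommGroup A] [DecidableEq A]
    (B : Finset A) {f : A → ℝ} (hf : ∀ t, 0 ≤ f t) :
    ∑ s ∈ B, ∑ s' ∈ B, f (s' - s) ≤ #B * ∑ t ∈ B - B, f t := by
  have hrow : ∀ s ∈ B, ∑ s' ∈ B, f (s' - s) ≤ ∑ t ∈ B - B, f t := fun s hs => by
    rw [← sum_image fun a _ b _ h => sub_left_injective h]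
    exact sum_le_sum_of_subset_of_nonneg
      (image_subset_iff.mpr fun s' hs' => sub_mem_sub hs' hs) fun t _ _ => hf t
  simpa using sum_le_card_nsmul B _ _ hrow

theorem finite_setOf_abs_le {ι : Type*} [Fintype ι] (b : ι → ℝ) :
    {t : ι → ℤ | ∀ j, (|t j| : ℝ) ≤ b j}.Finite := by
  classical
  refine (Set.finite_Icc (-fun j => ⌈b j⌉) fun j => ⌈b j⌉).subset fun t ht => ?_
  have h j : |t j| ≤ ⌈b j⌉ := by exact_mod_cast (ht j).trans (Int.le_ceil _)
  exact ⟨fun j => neg_le_of_abs_le (h j), fun j => le_of_abs_le (h j)⟩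

theorem sum_le_tsum_subtype {α : Type*} {P : α → Prop} [Finite {a // P a}] {f : α → ℝ}
    (hf : ∀ a, 0 ≤ f a) (S : Finset α) (hS : ∀ a ∈ S, P a) :
    ∑ a ∈ S, f a ≤ ∑' a : {a // P a}, f a := by
  classical
  rw [← sum_subtype_of_mem f hS]
  exact Summable.of_finite.sum_le_tsum _ fun a _ => hf a

theorem coe_fourierChar_sum {α : Type*} (s : Finset α) (f : α → ℝ) :
    (𝐞 (∑ i ∈ s, f i) : ℂ) = ∏ i ∈ s, (𝐞 (f i) : ℂ) := by
  induction s using Finset.cons_induction with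
  | empty => simp
  | cons a s ha ih => rw [sum_cons, prod_cons, AddChar.map_add_eq_mul, Circle.coe_mul, ih]

theorem fourierChar_intCast_mul_sub_round (k : ℤ) (y : ℝ) :
    𝐞 (k * y) = 𝐞 (k * (y - round y)) := by
  have h : (k : ℝ) * y = k * (y - round y) + ((k * round y : ℤ) : ℝ) := by push_cast; ring
  rw [h, AddChar.map_add_eq_mul, fourierChar_apply' ((k * round y : ℤ) : ℝ),
    Circle.exp_two_pi_mul_int, mul_one]

theorem half_le_re_fourierChar {θ : ℝ} (hθ : |θ| ≤ 1 / 6) : 1 / 2 ≤ (𝐞 θ : ℂ).re := by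
  rw [fourierChar_apply, Complex.exp_ofReal_mul_I_re, ← Real.cos_abs, abs_mul,
    abs_of_pos (by positivity : 0 < 2 * π)]
  calc (1 / 2 : ℝ) = cos (π / 3) := cos_pi_div_three.symm
    _ ≤ cos (2 * π * |θ|) :=
      cos_le_cos_of_nonneg_of_le_pi (by positivity) (by linarith [pi_pos]) (by nlinarith [pi_pos])

theorem card_div_two_le_norm_sum_fourierChar (K : Finset ℤ) (y : ℝ)
    (hK : ∀ k ∈ K, |(k : ℝ)| * distInt y ≤ 1 / 6) :
    (#K : ℝ) / 2 ≤ ‖∑ k ∈ K, (𝐞 (k * y) : ℂ)‖ :=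
  calc (#K : ℝ) / 2 = ∑ _k ∈ K, (1 / 2 : ℝ) := by rw [sum_const, nsmul_eq_mul]; ring
    _ ≤ ∑ k ∈ K, (𝐞 (k * y) : ℂ).re := sum_le_sum fun k hk => by
      rw [fourierChar_intCast_mul_sub_round]
      exact half_le_re_fourierChar (by rw [abs_mul]; exact hK k hk)
    _ = (∑ k ∈ K, (𝐞 (k * y) : ℂ)).re := (Complex.re_sum _ _).symm
    _ ≤ _ := Complex.re_le_norm _

section MeasureFourier

variable {ι : Type*} [Fintype ι] (μ : Measure (EuclideanSpace ℝ ι))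

theorem muFT_eq_integral_fourierChar (v : EuclideanSpace ℝ ι) :
    muFT μ v = ∫ ξ, (𝐞 (-inner ℝ ξ v) : ℂ) ∂μ := by
  simp only [muFT, fourierChar_apply]
  congr! 5
  ring

theorem muFT_zero [IsProbabilityMeasure μ] : muFT μ 0 = 1 := by
  simp [muFT]

theorem integrable_fourierChar_inner [IsFiniteMeasure μ] (v : EuclideanSpace ℝ ι) :
    Integrable (fun ξ => (𝐞 (-inner ℝ ξ v) : ℂ)) μ :=
  .of_bound (by fun_prop) 1 (ae_of_all _ fun ξ => (Circle.norm_coe _).le)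

variable {A : Type*} [AddCommGroup A] (φ : A →+ EuclideanSpace ℝ ι) (B : Finset A)

theorem integral_norm_sum_fourierChar_sq [IsFiniteMeasure μ] :
    ((∫ ξ, ‖∑ s ∈ B, (𝐞 (inner ℝ ξ (φ s)) : ℂ)‖ ^ 2 ∂μ : ℝ) : ℂ) =
      ∑ s ∈ B, ∑ s' ∈ B, muFT μ (φ (s' - s)) := by
  have hexpand : ∀ ξ, ((‖∑ s ∈ B, (𝐞 (inner ℝ ξ (φ s)) : ℂ)‖ ^ 2 : ℝ) : ℂ) =
      ∑ s ∈ B, ∑ s' ∈ B, (𝐞 (-inner ℝ ξ (φ (s' - s))) : ℂ) := fun ξ => by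
    rw [Complex.ofReal_pow, ← Complex.mul_conj', map_sum, sum_mul_sum]
    refine sum_congr rfl fun s _ => sum_congr rfl fun s' _ => ?_
    rw [← Circle.coe_inv_eq_conj, ← Circle.coe_mul, ← AddChar.map_neg_eq_inv,
      ← AddChar.map_add_eq_mul, map_sub, inner_sub_right, neg_sub, sub_eq_add_neg]
  simp_rw [← integral_complex_ofReal, hexpand, muFT_eq_integral_fourierChar]
  rw [integral_finsetSum _ fun s _ => integrable_finsetSum _ fun s' _ =>
    integrable_fourierChar_inner μ _]
  exact sum_congr rfl fun s _ =>
    integral_finsetSum _ fun s' _ => integrable_fourierChar_inner μ _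

theorem integral_norm_sum_fourierChar_sq_le [IsFiniteMeasure μ] [DecidableEq A] :
    ∫ ξ, ‖∑ s ∈ B, (𝐞 (inner ℝ ξ (φ s)) : ℂ)‖ ^ 2 ∂μ ≤
      #B * ∑ t ∈ B - B, ‖muFT μ (φ t)‖ := by
  calc ∫ ξ, ‖∑ s ∈ B, (𝐞 (inner ℝ ξ (φ s)) : ℂ)‖ ^ 2 ∂μ
      = ‖((∫ ξ, ‖∑ s ∈ B, (𝐞 (inner ℝ ξ (φ s)) : ℂ)‖ ^ 2 ∂μ : ℝ) : ℂ)‖ := by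
        rw [Complex.norm_real, Real.norm_of_nonneg (integral_nonneg fun _ => by positivity)]
    _ = ‖∑ s ∈ B, ∑ s' ∈ B, muFT μ (φ (s' - s))‖ := by
        rw [integral_norm_sum_fourierChar_sq]
    _ ≤ ∑ s ∈ B, ∑ s' ∈ B, ‖muFT μ (φ (s' - s))‖ :=
        (norm_sum_le _ _).trans (sum_le_sum fun _ _ => norm_sum_le _ _)
    _ ≤ _ := sum_sum_sub_le_card_mul_sum_sub B (f := fun t => ‖muFT μ (φ t)‖) fun _ => norm_nonneg _

end MeasureFourier

section IntBox

variable {ι : Type*} [Fintype ι] [DecidableEq ι]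

def intBox (N : ι → ℕ) : Finset (ι → ℤ) := Fintype.piFinset fun j => Icc 0 (N j : ℤ)

theorem card_intBox (N : ι → ℕ) : (#(intBox N) : ℝ) = ∏ j, ((N j : ℝ) + 1) := by
  simp [intBox, Fintype.card_piFinset]

theorem abs_le_of_mem_intBox_sub {N : ι → ℕ} {t : ι → ℤ} (ht : t ∈ intBox N - intBox N)
    (j : ι) : |t j| ≤ N j := by
  obtain ⟨a, ha, b, hb, rfl⟩ := mem_sub.mp ht
  have ha := mem_Icc.mp (Fintype.mem_piFinset.mp ha j)
  have hb := mem_Icc.mp (Fintype.mem_piFinset.mp hb j)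
  rw [Pi.sub_apply, abs_le]
  omega

theorem sum_intBox_fourierChar (N : ι → ℕ) (y : ι → ℝ) :
    ∑ s ∈ intBox N, (𝐞 (∑ j, s j * y j) : ℂ) = ∏ j, ∑ k ∈ Icc 0 (N j : ℤ), (𝐞 (k * y j) : ℂ) := by
  rw [prod_univ_sum]
  exact sum_congr rfl fun s _ => coe_fourierChar_sum _ _

theorem prod_div_two_le_norm_sum_intBox_fourierChar {N : ι → ℕ} {y : ι → ℝ}
    (hy : ∀ j, N j * distInt (y j) ≤ 1 / 6) :
    ∏ j, ((N j : ℝ) + 1) / 2 ≤ ‖∑ s ∈ intBox N, (𝐞 (∑ j, s j * y j) : ℂ)‖ := by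
  rw [sum_intBox_fourierChar, norm_prod]
  refine prod_le_prod (fun j _ => by positivity) fun j _ => ?_
  have hcard : (#(Icc 0 (N j : ℤ)) : ℝ) = N j + 1 := by simp
  rw [← hcard]
  refine card_div_two_le_norm_sum_fourierChar _ _ fun k hk => ?_
  have hk := mem_Icc.mp hk
  have hkN : |(k : ℝ)| ≤ N j := by
    rw [abs_of_nonneg (by exact_mod_cast hk.1)]; exact_mod_cast hk.2
  calc |(k : ℝ)| * distInt (y j) ≤ N j * distInt (y j) :=
        mul_le_mul_of_nonneg_right hkN (abs_nonneg _)
    _ ≤ 1 / 6 := hy j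

end IntBox

section Rectangles

variable {n m : ℕ}

/-- `(t_1 q, …, t_m q)` as an additive function of `t`. -/
def freqVec (q : Fin n → ℤ) : (Fin m → ℤ) →+ EuclideanSpace ℝ (Fin m × Fin n) where
  toFun t := WithLp.toLp 2 fun p => (t p.1 : ℝ) * (q p.2 : ℝ)
  map_zero' := by ext; simp
  map_add' s t := by ext; simp [add_mul]

theorem inner_freqVec (q : Fin n → ℤ) (x : EuclideanSpace ℝ (Fin m × Fin n)) (t : Fin m → ℤ) :
    inner ℝ x (freqVec q t) = ∑ j, t j * ∑ i, (q i : ℝ) * x (j, i) := by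
  simp only [freqVec, AddMonoidHom.coe_mk, ZeroHom.coe_mk, PiLp.inner_apply, RCLike.inner_apply,
    conj_trivial, Fintype.sum_prod_type, mul_sum]
  exact sum_congr rfl fun j _ => sum_congr rfl fun i _ => by ring

theorem measureReal_RsetC_mul_card_intBox_le (q : Fin n → ℤ) {δ : Fin m → ℝ} {N : Fin m → ℕ}
    (hNδ : ∀ j, N j * δ j ≤ 1 / 6) (μ : Measure (EuclideanSpace ℝ (Fin m × Fin n)))
    [IsFiniteMeasure μ] :
    μ.real (RsetC n m q δ) * #(intBox N) ≤
      4 ^ m * ∑ t ∈ intBox N - intBox N, ‖muFT μ (freqVec q t)‖ := by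
  set D := fun x : EuclideanSpace ℝ (Fin m × Fin n) =>
    ∑ s ∈ intBox N, (𝐞 (inner ℝ x (freqVec q s)) : ℂ)
  set c : ℝ := #(intBox N) / 2 ^ m
  have hc : 0 < c := by simp only [c, card_intBox]; positivity
  have hlower : RsetC n m q δ ⊆ {x | c ^ 2 ≤ ‖D x‖ ^ 2} := fun x hx => by
    have hy : ∀ j, N j * distInt (∑ i, (q i : ℝ) * x (j, i)) ≤ 1 / 6 := fun j =>
      (mul_le_mul_of_nonneg_left (hx.2 j) (Nat.cast_nonneg _)).trans (hNδ j)
    have h := prod_div_two_le_norm_sum_intBox_fourierChar hy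
    rw [prod_div_distrib, prod_const, card_univ, Fintype.card_fin, ← card_intBox] at h
    simp only [D, inner_freqVec]
    exact pow_le_pow_left₀ hc.le h 2
  have hD : Integrable (fun x => ‖D x‖ ^ 2) μ := by
    refine .of_bound (by fun_prop) (#(intBox N) ^ 2) (ae_of_all _ fun x => ?_)
    rw [norm_pow, norm_norm]
    refine pow_le_pow_left₀ (norm_nonneg _) ((norm_sum_le _ _).trans ?_) 2
    simp [Circle.norm_coe]
  have hmarkov := (mul_le_mul_of_nonneg_left (measureReal_mono hlower) (sq_nonneg c)).trans
    (mul_meas_ge_le_integral_of_nonneg (ae_of_all _ fun x => sq_nonneg _) hD (c ^ 2))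
  have hfourier := integral_norm_sum_fourierChar_sq_le μ (freqVec q) (intBox N)
  have hb : (0 : ℝ) < #(intBox N) := by rw [card_intBox]; positivity
  calc μ.real (RsetC n m q δ) * #(intBox N)
      = 4 ^ m / #(intBox N) * (c ^ 2 * μ.real (RsetC n m q δ)) := by
        rw [show (4 : ℝ) ^ m = (2 ^ m) ^ 2 by rw [← pow_mul, mul_comm, pow_mul]; norm_num]
        simp only [c]; field_simp
    _ ≤ 4 ^ m / #(intBox N) * (#(intBox N) * ∑ t ∈ intBox N - intBox N, ‖muFT μ (freqVec q t)‖) :=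
        mul_le_mul_of_nonneg_left (hmarkov.trans hfourier) (by positivity)
    _ = _ := by field_simp

theorem sum_norm_muFT_intBox_sub_le (q : Fin n → ℤ) {δ : Fin m → ℝ} {N : Fin m → ℕ}
    (hN : ∀ j, (N j : ℝ) ≤ 2 / δ j) (μ : Measure (EuclideanSpace ℝ (Fin m × Fin n)))
    [IsProbabilityMeasure μ] :
    ∑ t ∈ intBox N - intBox N, ‖muFT μ (freqVec q t)‖ ≤
      1 + ∑' t : {t : Fin m → ℤ // t ≠ 0 ∧ ∀ j, (|t j| : ℝ) ≤ 2 / δ j},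
        ‖muFT μ (freqVec q t)‖ := by
  have h0 : (0 : Fin m → ℤ) ∈ intBox N - intBox N := by
    have h : (0 : Fin m → ℤ) ∈ intBox N := Fintype.mem_piFinset.mpr fun j => by simp
    simpa using Finset.sub_mem_sub h h
  rw [← add_sum_erase _ _ h0, map_zero, muFT_zero, norm_one]
  have : Finite {t : Fin m → ℤ // t ≠ 0 ∧ ∀ j, (|t j| : ℝ) ≤ 2 / δ j} :=
    ((finite_setOf_abs_le fun j => 2 / δ j).subset fun _ ht => ht.2).to_subtype
  gcongr
  exact sum_le_tsum_subtype (fun _ => norm_nonneg _) _ fun t ht =>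
    ⟨ne_of_mem_erase ht, fun j => by
      rw [← Int.cast_abs]
      exact (Int.cast_le.mpr (abs_le_of_mem_intBox_sub (mem_of_mem_erase ht) j)).trans (hN j)⟩

theorem exists_nat_mul_le_one_div_six {δ : ℝ} (hδ : 0 < δ) :
    ∃ N : ℕ, (N : ℝ) * δ ≤ 1 / 6 ∧ (N : ℝ) ≤ 2 / δ ∧ 1 ≤ ((N : ℝ) + 1) * (6 * δ) := by
  have hN := Nat.floor_le (by positivity : 0 ≤ 1 / (6 * δ))
  refine ⟨⌊1 / (6 * δ)⌋₊, ?_, ?_, ?_⟩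
  · calc (⌊1 / (6 * δ)⌋₊ : ℝ) * δ ≤ 1 / (6 * δ) * δ := by gcongr
      _ = 1 / 6 := by field_simp
  · refine hN.trans ?_
    rw [div_le_div_iff₀ (by positivity) hδ]
    nlinarith
  · rw [← div_le_iff₀ (by positivity)]
    exact (Nat.lt_floor_add_one _).le

theorem measureReal_RsetC_le (q : Fin n → ℤ) {δ : Fin m → ℝ} (hδ : ∀ j, 0 < δ j)
    (μ : Measure (EuclideanSpace ℝ (Fin m × Fin n))) [IsProbabilityMeasure μ] :
    μ.real (RsetC n m q δ) ≤ 24 ^ m * (∏ j, δ j) *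
      (1 + ∑' t : {t : Fin m → ℤ // t ≠ 0 ∧ ∀ j, (|t j| : ℝ) ≤ 2 / δ j},
        ‖muFT μ (freqVec q t)‖) := by
  choose N hNδ hN hN₁ using fun j => exists_nat_mul_le_one_div_six (hδ j)
  have hcard : 1 ≤ (#(intBox N) : ℝ) * (6 ^ m * ∏ j, δ j) := by
    have h6 : (6 : ℝ) ^ m * ∏ j, δ j = ∏ j, (6 * δ j) := by simp [prod_mul_distrib]
    rw [card_intBox, h6, ← prod_mul_distrib]
    exact one_le_prod fun j _ => hN₁ j
  calc μ.real (RsetC n m q δ)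
      ≤ μ.real (RsetC n m q δ) * #(intBox N) * (6 ^ m * ∏ j, δ j) := by
        rw [mul_assoc]
        exact le_mul_of_one_le_right measureReal_nonneg hcard
    _ ≤ 4 ^ m * (1 + ∑' t : {t : Fin m → ℤ // t ≠ 0 ∧ ∀ j, (|t j| : ℝ) ≤ 2 / δ j},
          ‖muFT μ (freqVec q t)‖) * (6 ^ m * ∏ j, δ j) := by
        refine mul_le_mul_of_nonneg_right ?_
          (mul_nonneg (by positivity) (prod_nonneg fun j _ => (hδ j).le))
        exact (measureReal_RsetC_mul_card_intBox_le q hNδ μ).trans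
          (mul_le_mul_of_nonneg_left (sum_norm_muFT_intBox_sub_le q hN μ) (by positivity))
    _ = _ := by rw [show (24 : ℝ) ^ m = 4 ^ m * 6 ^ m by rw [← mul_pow]; norm_num]; ring

end Rectangles

theorem stmt14_general (n m : ℕ) :
    ∃ C : ℝ, 0 < C ∧
      ∀ q : Fin n → ℤ, q ≠ 0 →
      ∀ δ : Fin m → ℝ, (∀ j, 0 < δ j ∧ δ j < 1 / 2) →
      ∀ μ : Measure (EuclideanSpace ℝ (Fin m × Fin n)), IsProbabilityMeasure μ →
        μ (unitCube n m)ᶜ = 0 →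
        μ (RsetC n m q δ) ≤ ENNReal.ofReal (C * (∏ j, δ j) *
          (1 + ∑' t : {t : Fin m → ℤ // t ≠ 0 ∧ ∀ j, (|t j| : ℝ) ≤ 2 / δ j},
            ‖muFT μ (WithLp.toLp 2 (fun p : Fin m × Fin n => (t.1 p.1 : ℝ) * (q p.2 : ℝ)))‖)) := by
  refine ⟨24 ^ m, by positivity, fun q _ δ hδ μ _ _ => ?_⟩
  rw [← ofReal_measureReal]
  exact ENNReal.ofReal_le_ofReal (measureReal_RsetC_le q (fun j => (hδ j).1) μ)

/-- Fourier-analytic upper bound for the measure of `R̄(q,δ)` (Lemma 5.2). -/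
theorem stmt14 (n m : ℕ) (hn : 1 ≤ n) (hm : 1 ≤ m) :
    ∃ C : ℝ, 0 < C ∧
      ∀ q : Fin n → ℤ, q ≠ 0 →
      ∀ δ : Fin m → ℝ, (∀ j, 0 < δ j ∧ δ j < 1 / 2) →
      ∀ μ : Measure (EuclideanSpace ℝ (Fin m × Fin n)), IsProbabilityMeasure μ →
        μ (unitCube n m)ᶜ = 0 →
        μ (RsetC n m q δ) ≤ ENNReal.ofReal (C * (∏ j, δ j) *
          (1 + ∑' t : {t : Fin m → ℤ // t ≠ 0 ∧ ∀ j, (|t j| : ℝ) ≤ 2 / δ j},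
            ‖muFT μ (WithLp.toLp 2 (fun p : Fin m × Fin n => (t.1 p.1 : ℝ) * (q p.2 : ℝ)))‖)) :=
  stmt14_general n m

end
end
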